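/- arXiv:2002.07101 — 2 statements merged into one kernel-verified Lean document; each statement's English description precedes it below -/
import Mathlib

section
/- (Recursive error bound) Fix a constant c ≥ 0. Suppose for each integer N > 0 one has a finite sequence of reals d₀,…,d_N (depending on N) with d_n ≤ c/N² + (c/N²)·∑_{t=1}^{n-1} ∑_{s=1}^{t} d_s for all 0 ≤ n ≤ N. Then max_{0 ≤ n ≤ N} d_n → 0 as N → ∞. -/
/-!
A discrete Grönwall argument. With `ε = c / N²` and `D m = ∑_{t=1}^{m} ∑_{s=1}^{t} d s`, every
`d s` with `s ≤ m + 1` is at most `ε (1 + D m)`, so `D (m + 1) = D m + ∑_{s=1}^{m+1} d s` gives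
`1 + D (m + 1) ≤ (1 + N ε) (1 + D m)`. Hence `1 + D m ≤ (1 + c / N) ^ N ≤ exp c` for `m ≤ N`, and
`d n ≤ c exp c / N²` uniformly in `n ≤ N`.
-/

open Finset Filter Real

def doublePartialSum (x : ℕ → ℝ) (n : ℕ) : ℝ :=
  ∑ t ∈ Icc 1 n, ∑ s ∈ Icc 1 t, x s

section DoublePartialSum

variable {x : ℕ → ℝ}

lemma doublePartialSum_succ (x : ℕ → ℝ) (n : ℕ) :
    doublePartialSum x (n + 1) = doublePartialSum x n + ∑ s ∈ Icc 1 (n + 1), x s :=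
  sum_Icc_succ_top (by omega) _

lemma doublePartialSum_nonneg (hx : ∀ n, 0 ≤ x n) (n : ℕ) : 0 ≤ doublePartialSum x n :=
  sum_nonneg fun _ _ => sum_nonneg fun s _ => hx s

lemma doublePartialSum_mono (hx : ∀ n, 0 ≤ x n) : Monotone (doublePartialSum x) :=
  fun _ _ hab => sum_le_sum_of_subset_of_nonneg (Icc_subset_Icc_right hab)
    fun _ _ _ => sum_nonneg fun s _ => hx s

variable {ε : ℝ} {N : ℕ}

lemma one_add_doublePartialSum_succ_le (hx : ∀ n, 0 ≤ x n) (hε : 0 ≤ ε)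
    (hrec : ∀ n ≤ N, x n ≤ ε + ε * doublePartialSum x (n - 1)) {m : ℕ} (hm : m + 1 ≤ N) :
    1 + doublePartialSum x (m + 1) ≤ (1 + N * ε) * (1 + doublePartialSum x m) := by
  have hterm : ∀ s ∈ Icc 1 (m + 1), x s ≤ ε * (1 + doublePartialSum x m) := by
    intro s hs
    rw [mem_Icc] at hs
    have hD : doublePartialSum x (s - 1) ≤ doublePartialSum x m :=
      doublePartialSum_mono hx (by omega)
    nlinarith [hrec s (by omega)]
  have hsum : ∑ s ∈ Icc 1 (m + 1), x s ≤ N * (ε * (1 + doublePartialSum x m)) := by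
    calc ∑ s ∈ Icc 1 (m + 1), x s
        ≤ (m + 1 : ℕ) * (ε * (1 + doublePartialSum x m)) := by
          simpa using sum_le_card_nsmul _ _ _ hterm
      _ ≤ N * (ε * (1 + doublePartialSum x m)) := by
          gcongr
          exact mul_nonneg hε (by linarith [doublePartialSum_nonneg hx m])
  rw [doublePartialSum_succ]
  linarith

lemma one_add_doublePartialSum_le_pow (hx : ∀ n, 0 ≤ x n) (hε : 0 ≤ ε)
    (hrec : ∀ n ≤ N, x n ≤ ε + ε * doublePartialSum x (n - 1)) {m : ℕ} (hm : m ≤ N) :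
    1 + doublePartialSum x m ≤ (1 + N * ε) ^ m := by
  induction m with
  | zero => simp [doublePartialSum]
  | succ m ih =>
    calc 1 + doublePartialSum x (m + 1)
        ≤ (1 + N * ε) * (1 + doublePartialSum x m) :=
          one_add_doublePartialSum_succ_le hx hε hrec hm
      _ ≤ (1 + N * ε) * (1 + N * ε) ^ m := by gcongr; exact ih (by omega)
      _ = (1 + N * ε) ^ (m + 1) := by ring

theorem le_mul_pow_of_le_add_mul_doublePartialSum (hx : ∀ n, 0 ≤ x n) (hε : 0 ≤ ε)
    (hrec : ∀ n ≤ N, x n ≤ ε + ε * doublePartialSum x (n - 1)) {n : ℕ} (hn : n ≤ N) :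
    x n ≤ ε * (1 + N * ε) ^ N :=
  calc x n ≤ ε * (1 + doublePartialSum x (n - 1)) := by linarith [hrec n hn]
    _ ≤ ε * (1 + N * ε) ^ (n - 1) := by
        gcongr; exact one_add_doublePartialSum_le_pow hx hε hrec (by omega)
    _ ≤ ε * (1 + N * ε) ^ N := by
        gcongr
        · exact le_add_of_nonneg_right (by positivity)
        · omega

end DoublePartialSum

/-- Lemma 2 of the paper: if for each `N > 0` the sequence
`d N 0, …, d N N` of nonnegative reals satisfies
`d N n ≤ c/N² + (c/N²) ∑_{t=1}^{n-1} ∑_{s=1}^{t} d N s` for all `n ≤ N`,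
then `max_{0 ≤ n ≤ N} d N n → 0` as `N → ∞`. -/
theorem stmt_3 (c : ℝ) (hc : 0 ≤ c) (d : ℕ → ℕ → ℝ)
    (hnonneg : ∀ N n, 0 ≤ d N n)
    (hrec : ∀ N, 0 < N → ∀ n ≤ N,
      d N n ≤ c / (N : ℝ) ^ 2 +
        (c / (N : ℝ) ^ 2) * ∑ t ∈ Finset.Icc 1 (n - 1), ∑ s ∈ Finset.Icc 1 t, d N s) :
    Tendsto (fun N => (Finset.range (N + 1)).sup' Finset.nonempty_range_add_one (d N))
      atTop (nhds 0) := by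
  have hbound : ∀ N, 0 < N → ∀ n ≤ N, d N n ≤ c * exp c / (N : ℝ) ^ 2 := by
    intro N hN n hn
    have hN' : (N : ℝ) ≠ 0 := by positivity
    calc d N n ≤ c / (N : ℝ) ^ 2 * (1 + N * (c / (N : ℝ) ^ 2)) ^ N :=
          le_mul_pow_of_le_add_mul_doublePartialSum (hnonneg N) (by positivity) (hrec N hN) hn
      _ = c / (N : ℝ) ^ 2 * (1 - -c / N) ^ N := by field_simp; ring
      _ ≤ c / (N : ℝ) ^ 2 * exp (- -c) := by
          gcongr; exact one_sub_div_pow_le_exp_neg (by linarith [N.cast_nonneg (α := ℝ)])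
      _ = c * exp c / (N : ℝ) ^ 2 := by rw [neg_neg]; ring
  refine squeeze_zero' (g := fun N : ℕ => c * exp c / (N : ℝ) ^ 2) ?_ ?_ ?_
  · exact Eventually.of_forall fun N =>
      (hnonneg N 0).trans (le_sup' (d N) (mem_range.mpr N.succ_pos))
  · filter_upwards [eventually_gt_atTop 0] with N hN
    exact sup'_le _ _ fun n hn => hbound N hN n (Nat.lt_succ_iff.mp (mem_range.mp hn))
  · exact tendsto_const_nhds.div_atTop
      ((tendsto_pow_atTop two_ne_zero).comp tendsto_natCast_atTop_atTop)
end

section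
/- Let D₀ = 0 and D_{n+1} = C + C·∑_{t=1}^{n} ∑_{s=1}^{t} D_s for n ≥ 0, where C > 0. Then for n > 0, D_n = C·(1/((1+a)aⁿ⁻¹) + aⁿ/(1+a)), where a = (2+C+√(C²+4C))/2 is the larger root of x² − (2+C)x + 1 = 0. -/
open Finset Real

/-!
Differencing the recursion twice removes both sums: `D (n+2) - D (n+1) = C ∑_{s ≤ n+1} D s`, hence
`D (n+3) = (2 + C) D (n+2) - D (n+1)` for all `n`, with `D 1 = C` and `D 2 = C + C²`. The
characteristic roots of this recurrence are `a` and `a⁻¹`, so the closed form, a combination of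
`a⁻ⁿ` and `aⁿ`, satisfies the same recurrence; it also has the same two initial values.
-/

theorem eq_of_add_two_eq_mul_sub {R : Type*} [Ring R] {u v : ℕ → R} (p : R)
    (hu : ∀ n, u (n + 2) = p * u (n + 1) - u n) (hv : ∀ n, v (n + 2) = p * v (n + 1) - v n)
    (h0 : u 0 = v 0) (h1 : u 1 = v 1) : u = v := by
  have hpair : ∀ n, u n = v n ∧ u (n + 1) = v (n + 1) := by
    intro n
    induction n with
    | zero => exact ⟨h0, h1⟩
    | succ n ih => exact ⟨ih.2, by rw [hu, hv, ih.1, ih.2]⟩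
  exact funext fun n => (hpair n).1

section Majorant

variable {R : Type*} [CommRing R] {C : R} {D : ℕ → R}
  (hrec : ∀ n : ℕ, D (n + 1) = C + C * ∑ t ∈ Icc 1 n, ∑ s ∈ Icc 1 t, D s)
include hrec

theorem majorant_one : D 1 = C := by
  simpa using hrec 0

theorem majorant_add_two_sub (n : ℕ) :
    D (n + 2) - D (n + 1) = C * ∑ s ∈ Icc 1 (n + 1), D s := by
  rw [hrec (n + 1), hrec n, sum_Icc_succ_top (by omega : 1 ≤ n + 1)]
  ring

theorem majorant_two : D 2 = C + C * C := by
  have h := majorant_add_two_sub hrec 0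
  rw [zero_add, Icc_self, sum_singleton] at h
  linear_combination h + (1 + C) * majorant_one hrec

theorem majorant_add_three (n : ℕ) : D (n + 3) = (2 + C) * D (n + 2) - D (n + 1) := by
  have hsum : ∑ s ∈ Icc 1 (n + 2), D s = ∑ s ∈ Icc 1 (n + 1), D s + D (n + 2) :=
    sum_Icc_succ_top (by omega) D
  linear_combination majorant_add_two_sub hrec (n + 1) - majorant_add_two_sub hrec n + C * hsum

end Majorant

section ClosedForm

variable {K : Type*} [Field K]

/-- `majorantClosedForm C a m` is the claimed value of `D (m + 1)`. -/
def majorantClosedForm (C a : K) (m : ℕ) : K :=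
  C * (1 / ((1 + a) * a ^ m) + a ^ (m + 1) / (1 + a))

variable {C a : K} (ha : a ^ 2 - (2 + C) * a + 1 = 0) (ha0 : a ≠ 0) (h1a : 1 + a ≠ 0)
include h1a

theorem majorantClosedForm_zero : majorantClosedForm C a 0 = C := by
  simp only [majorantClosedForm]
  field_simp
  ring

include ha ha0

theorem majorantClosedForm_one : majorantClosedForm C a 1 = C + C * C := by
  simp only [majorantClosedForm]
  field_simp
  linear_combination C * (1 + a) * ha

theorem majorantClosedForm_add_two (m : ℕ) :
    majorantClosedForm C a (m + 2) =
      (2 + C) * majorantClosedForm C a (m + 1) - majorantClosedForm C a m := by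
  simp only [majorantClosedForm]
  rw [pow_succ a (m + 2), pow_succ a (m + 1), pow_succ a m]
  field_simp
  linear_combination C * (1 + a ^ 3 * (a ^ m) ^ 2) * ha

end ClosedForm

theorem larger_root_sq_sub_add_one {C : ℝ} (hC : 0 ≤ C) :
    ((2 + C + √(C ^ 2 + 4 * C)) / 2) ^ 2 - (2 + C) * ((2 + C + √(C ^ 2 + 4 * C)) / 2) + 1 = 0 := by
  have hs : √(C ^ 2 + 4 * C) ^ 2 = C ^ 2 + 4 * C := sq_sqrt (by positivity)
  linear_combination hs / 4

theorem stmt_4_general (C : ℝ) (hC : 0 < C) (D : ℕ → ℝ)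
    (hrec : ∀ n : ℕ, D (n + 1) = C + C * ∑ t ∈ Finset.Icc 1 n, ∑ s ∈ Finset.Icc 1 t, D s)
    (a : ℝ) (ha : a = (2 + C + Real.sqrt (C ^ 2 + 4 * C)) / 2) :
    a ^ 2 - (2 + C) * a + 1 = 0 ∧
    ∀ n : ℕ, 0 < n →
      D n = C * (1 / ((1 + a) * a ^ (n - 1)) + a ^ n / (1 + a)) := by
  have hroot : a ^ 2 - (2 + C) * a + 1 = 0 := ha ▸ larger_root_sq_sub_add_one hC.le
  have hapos : 0 < a := by rw [ha]; positivity
  have h1a : 1 + a ≠ 0 := by positivity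
  have hshift : (fun m => D (m + 1)) = majorantClosedForm C a :=
    eq_of_add_two_eq_mul_sub (2 + C) (majorant_add_three hrec)
      (majorantClosedForm_add_two hroot hapos.ne' h1a)
      (by rw [majorant_one hrec, majorantClosedForm_zero h1a])
      (by rw [majorant_two hrec, majorantClosedForm_one hroot hapos.ne' h1a])
  refine ⟨hroot, fun n hn => ?_⟩
  obtain ⟨m, rfl⟩ : ∃ m, n = m + 1 := ⟨n - 1, by omega⟩
  exact congrFun hshift m

/-- closed form for the majorizing recursion `D₀ = 0`,
`D_{n+1} = C + C ∑_{t=1}^{n} ∑_{s=1}^{t} D_s`, with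
`a = (2+C+√(C²+4C))/2` the larger root of `x² − (2+C)x + 1 = 0`. -/
theorem stmt_4 (C : ℝ) (hC : 0 < C) (D : ℕ → ℝ)
    (hD0 : D 0 = 0)
    (hrec : ∀ n : ℕ, D (n + 1) = C + C * ∑ t ∈ Finset.Icc 1 n, ∑ s ∈ Finset.Icc 1 t, D s)
    (a : ℝ) (ha : a = (2 + C + Real.sqrt (C ^ 2 + 4 * C)) / 2) :
    a ^ 2 - (2 + C) * a + 1 = 0 ∧
    ∀ n : ℕ, 0 < n →
      D n = C * (1 / ((1 + a) * a ^ (n - 1)) + a ^ n / (1 + a)) :=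
  stmt_4_general C hC D hrec a ha
end
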